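/- Let m be an even positive integer and k̂ > 0. The function t ↦ exp(k̂·(log t)^m) is convex on (0, ∞) if and only if k̂ ≥ 1/m^(m+1). In particular, t ↦ exp(k̂·(log t)²) is convex on (0, ∞) if and only if k̂ ≥ 1/8. -/

import Mathlib

/-!
Writing `t = exp u`, the second derivative of `F ∘ log` at `t` is `(F'' u - F' u) / t ^ 2`, so
`F ∘ log` is convex on `(0, ∞)` exactly when `F' ≤ F''` everywhere. For `F u = exp (k u ^ m)`,
`F'' - F'` is a positive multiple of `u ^ (m - 2) (k m u ^ m + m - 1 - u)`, and with `m` even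
the only constraint is `u ≤ k m u ^ m + m - 1` for `u ≥ 0`. Bernoulli's inequality gives
`u - (m - 1) ≤ (u / m) ^ m`, with equality at `u = m`, so this holds iff `k m ^ (m + 1) ≥ 1`.
-/

open Real Set

theorem ConvexOn.nonneg_of_hasDerivAt2 {S : Set ℝ} {f f' : ℝ → ℝ} {f'' x : ℝ}
    (hf : ConvexOn ℝ S f) (hS : IsOpen S) (hf' : ∀ y ∈ S, HasDerivAt f (f' y) y) (hx : x ∈ S)
    (hf'' : HasDerivAt f' f'' x) : 0 ≤ f'' := by
  have hmono : MonotoneOn (deriv f) S :=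
    hf.monotoneOn_deriv fun y hy => (hf' y hy).differentiableAt
  have hderiv : HasDerivAt (deriv f) f'' x :=
    hf''.congr_of_eventuallyEq <|
      Filter.eventually_of_mem (hS.mem_nhds hx) fun y hy => (hf' y hy).deriv
  calc 0 ≤ derivWithin (deriv f) S x := hmono.derivWithin_nonneg
    _ = f'' := by rw [derivWithin_of_isOpen hS hx, hderiv.deriv]

section CompLog

variable {F F' F'' : ℝ → ℝ}

theorem hasDerivAt_comp_log (hF : ∀ u, HasDerivAt F (F' u) u) {t : ℝ} (ht : 0 < t) :
    HasDerivAt (fun t => F (log t)) (F' (log t) / t) t :=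
  (hF (log t)).comp t (hasDerivAt_log ht.ne')

theorem hasDerivAt_comp_log_div (hF' : ∀ u, HasDerivAt F' (F'' u) u) {t : ℝ} (ht : 0 < t) :
    HasDerivAt (fun t => F' (log t) / t) ((F'' (log t) - F' (log t)) / t ^ 2) t :=
  ((hasDerivAt_comp_log hF' ht).fun_div (hasDerivAt_id' t) ht.ne').congr_deriv <| by field_simp

theorem convexOn_comp_log_iff (hF : ∀ u, HasDerivAt F (F' u) u)
    (hF' : ∀ u, HasDerivAt F' (F'' u) u) :
    ConvexOn ℝ (Ioi 0) (fun t => F (log t)) ↔ ∀ u, F' u ≤ F'' u := by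
  constructor
  · intro hconv u
    have h := hconv.nonneg_of_hasDerivAt2 isOpen_Ioi (fun t ht => hasDerivAt_comp_log hF ht)
      (exp_pos u) (hasDerivAt_comp_log_div hF' (exp_pos u))
    rw [log_exp, le_div_iff₀ (by positivity), zero_mul, sub_nonneg] at h
    exact h
  · intro h
    refine convexOn_of_hasDerivWithinAt2_nonneg (convex_Ioi 0)
      (fun t ht => (hasDerivAt_comp_log hF ht).continuousAt.continuousWithinAt)
      (fun t ht => (hasDerivAt_comp_log hF (by simpa using ht)).hasDerivWithinAt)
      (fun t ht => (hasDerivAt_comp_log_div hF' (by simpa using ht)).hasDerivWithinAt)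
      fun t _ => div_nonneg (sub_nonneg.mpr (h _)) (sq_nonneg t)

end CompLog

theorem sub_le_div_pow {m : ℕ} (hm : 0 < m) {u : ℝ} (hu : 0 ≤ u) : u - (m - 1) ≤ (u / m) ^ m := by
  have hm' : (0 : ℝ) < m := by exact_mod_cast hm
  have h := one_add_mul_le_pow (a := u / m - 1) (by linarith [div_nonneg hu hm'.le]) m
  rw [add_sub_cancel, mul_sub, mul_div_cancel₀ _ hm'.ne', mul_one] at h
  linarith

theorem forall_le_mul_pow_add_iff (k : ℝ) {m : ℕ} (hm : 0 < m) :
    (∀ u : ℝ, 0 ≤ u → u ≤ k * m * u ^ m + (m - 1)) ↔ 1 / (m : ℝ) ^ (m + 1) ≤ k := by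
  have hm' : (0 : ℝ) < m := by exact_mod_cast hm
  rw [div_le_iff₀ (by positivity)]
  constructor
  · intro h
    linarith [h m hm'.le, show k * m * (m : ℝ) ^ m = k * (m : ℝ) ^ (m + 1) by ring]
  · intro hk u hu
    have hum : k * m * u ^ m = k * (m : ℝ) ^ (m + 1) * (u / m) ^ m := by
      rw [div_pow, pow_succ]
      field_simp
    have hscale := mul_le_mul_of_nonneg_right hk (pow_nonneg (div_nonneg hu hm'.le) m)
    linarith [sub_le_div_pow hm hu]

section ExpMulPow

variable (k : ℝ)

theorem hasDerivAt_exp_mul_pow (m : ℕ) (u : ℝ) :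
    HasDerivAt (fun u => exp (k * u ^ m)) (exp (k * u ^ m) * (k * m * u ^ (m - 1))) u := by
  simpa only [mul_assoc] using ((hasDerivAt_pow m u).const_mul k).exp

variable {m : ℕ}

theorem hasDerivAt2_exp_mul_pow (hm : 1 ≤ m) (u : ℝ) :
    HasDerivAt (fun u => exp (k * u ^ m) * (k * m * u ^ (m - 1)))
      (exp (k * u ^ m) * (k * m) * (k * m * u ^ (2 * m - 2) + (m - 1) * u ^ (m - 2))) u := by
  obtain ⟨n, rfl⟩ := Nat.exists_eq_add_of_le' hm
  have h := (hasDerivAt_exp_mul_pow k (n + 1) u).mul ((hasDerivAt_pow n u).const_mul (k * (n + 1)))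
  simp only [Nat.add_sub_cancel, Nat.cast_add, Nat.cast_one] at h ⊢
  refine h.congr_deriv ?_
  rw [show 2 * (n + 1) - 2 = n + n by omega, show n + 1 - 2 = n - 1 by omega]
  ring

theorem exp_mul_pow_deriv2_sub_deriv (hm : 2 ≤ m) (u : ℝ) :
    exp (k * u ^ m) * (k * m) * (k * m * u ^ (2 * m - 2) + (m - 1) * u ^ (m - 2)) -
        exp (k * u ^ m) * (k * m * u ^ (m - 1)) =
      exp (k * u ^ m) * (k * m) * u ^ (m - 2) * (k * m * u ^ m + (m - 1) - u) := by
  obtain ⟨n, rfl⟩ := Nat.exists_eq_add_of_le' hm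
  simp only [show 2 * (n + 2) - 2 = (n + 2) + n by omega, show n + 2 - 1 = n + 1 by omega,
    Nat.add_sub_cancel]
  ring

theorem deriv_le_deriv2_exp_mul_pow_iff (hm : 2 ≤ m) (hme : Even m) (hk : 0 < k) :
    (∀ u : ℝ, exp (k * u ^ m) * (k * m * u ^ (m - 1)) ≤
        exp (k * u ^ m) * (k * m) * (k * m * u ^ (2 * m - 2) + (m - 1) * u ^ (m - 2))) ↔
      1 / (m : ℝ) ^ (m + 1) ≤ k := by
  have hm' : (2 : ℝ) ≤ m := by exact_mod_cast hm
  rw [← forall_le_mul_pow_add_iff k (by omega)]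
  refine forall_congr' fun u => ?_
  rw [← sub_nonneg, exp_mul_pow_deriv2_sub_deriv k hm]
  refine ⟨fun h hu => ?_, fun h => ?_⟩
  · rcases hu.eq_or_lt with rfl | hu
    · rw [zero_pow (by omega), mul_zero, zero_add]
      linarith
    · have : 0 < exp (k * u ^ m) * (k * m) * u ^ (m - 2) := by positivity
      linarith [nonneg_of_mul_nonneg_right h this]
  · have hfac : 0 ≤ exp (k * u ^ m) * (k * m) * u ^ (m - 2) :=
      mul_nonneg (by positivity) ((hme.tsub even_two).pow_nonneg u)
    refine mul_nonneg hfac ?_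
    rcases le_or_gt 0 u with hu | hu
    · linarith [h hu]
    · linarith [mul_nonneg (mul_nonneg hk.le (Nat.cast_nonneg m)) (hme.pow_nonneg u)]

theorem convexOn_exp_mul_log_pow_iff (hm : 2 ≤ m) (hme : Even m) (hk : 0 < k) :
    ConvexOn ℝ (Ioi 0) (fun t => exp (k * log t ^ m)) ↔ 1 / (m : ℝ) ^ (m + 1) ≤ k := by
  rw [convexOn_comp_log_iff (hasDerivAt_exp_mul_pow k m) (hasDerivAt2_exp_mul_pow k (by omega))]
  exact deriv_le_deriv2_exp_mul_pow_iff k hm hme hk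

end ExpMulPow

theorem exp_log_pow_convex_iff (m : ℕ) (hm : 0 < m) (hme : Even m)
    (khat : ℝ) (hkhat : 0 < khat) :
    (ConvexOn ℝ (Set.Ioi (0 : ℝ)) (fun t : ℝ => Real.exp (khat * Real.log t ^ m)) ↔
      1 / (m : ℝ) ^ (m + 1) ≤ khat) ∧
    (ConvexOn ℝ (Set.Ioi (0 : ℝ)) (fun t : ℝ => Real.exp (khat * Real.log t ^ 2)) ↔
      1 / 8 ≤ khat) := by
  have hm2 : 2 ≤ m := by
    obtain ⟨r, rfl⟩ := hme
    omega
  refine ⟨convexOn_exp_mul_log_pow_iff khat hm2 hme hkhat, ?_⟩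
  rw [convexOn_exp_mul_log_pow_iff khat le_rfl even_two hkhat]
  norm_num
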